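/- Let γ ∈ GL_{N+1}(𝔽_q), regarded as a k̄-linear automorphism of k̄^{N+1}, and let V ⊆ k̄^{N+1} be a proper γ-invariant subspace. Let P ∈ ℙ(V) ⊆ ℙ^N(k̄) be a projective point that does not lie in ℙ(W) for any proper γ-invariant subspace W strictly contained in V. Then the orbit of P under the cyclic group generated by the projective automorphism of ℙ^N(k̄) induced by γ has exactly exp V elements. -/

import Mathlib

/-- The `k̄`-linear endomorphism of `k̄^m` induced by a matrix
`γ ∈ GL_m(𝔽_q)` via base extension. -/
noncomputable def matEnd (k : Type*) [Field k] [Fintype k] (m : ℕ)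
    (γ : Matrix.GeneralLinearGroup (Fin m) k) :
    Module.End (AlgebraicClosure k) (Fin m → AlgebraicClosure k) :=
  Matrix.mulVecLin
    ((γ : Matrix (Fin m) (Fin m) k).map (algebraMap k (AlgebraicClosure k)))

/-- `V` is a `γ`-invariant subspace: `γ(V) = V`. -/
def IsInvt (k : Type*) [Field k] [Fintype k] (m : ℕ)
    (γ : Matrix.GeneralLinearGroup (Fin m) k)
    (V : Submodule (AlgebraicClosure k) (Fin m → AlgebraicClosure k)) : Prop :=
  Submodule.map (matEnd k m γ) V = V

/-- The exponent of `V`: the least `e ≥ 1` such that `γ^e` acts on `V` as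
multiplication by a scalar. -/
noncomputable def expV (k : Type*) [Field k] [Fintype k] (m : ℕ)
    (γ : Matrix.GeneralLinearGroup (Fin m) k)
    (V : Submodule (AlgebraicClosure k) (Fin m → AlgebraicClosure k)) : ℕ :=
  sInf {e : ℕ | 1 ≤ e ∧ ∃ c : AlgebraicClosure k,
    ∀ v ∈ V, (matEnd k m γ ^ e) v = c • v}

/-- `V` is a proper `γ`-invariant subspace. -/
def IsProper (k : Type*) [Field k] [Fintype k] (m : ℕ)
    (γ : Matrix.GeneralLinearGroup (Fin m) k)
    (V : Submodule (AlgebraicClosure k) (Fin m → AlgebraicClosure k)) : Prop :=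
  V ≠ ⊥ ∧ IsInvt k m γ V ∧
    ∀ W : Submodule (AlgebraicClosure k) (Fin m → AlgebraicClosure k),
      W ≠ ⊥ → IsInvt k m γ W → V < W → expV k m γ V < expV k m γ W

/-- The projective automorphism of `ℙ^{m-1}(k̄)` induced by
`g ∈ GL_m(𝔽_q)`. -/
noncomputable def projGamma (k : Type*) [Field k] [Fintype k] (m : ℕ)
    (g : Matrix.GeneralLinearGroup (Fin m) k) :
    Projectivization (AlgebraicClosure k) (Fin m → AlgebraicClosure k) →
    Projectivization (AlgebraicClosure k) (Fin m → AlgebraicClosure k) :=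
  fun P => Projectivization.mk (AlgebraicClosure k)
    (((g : Matrix (Fin m) (Fin m) k).map
        (algebraMap k (AlgebraicClosure k))).mulVec P.rep) (by
      intro h
      apply P.rep_nonzero
      set f := algebraMap k (AlgebraicClosure k)
      have hBA : ((g⁻¹ : Matrix.GeneralLinearGroup (Fin m) k) : Matrix (Fin m) (Fin m) k).map f *
          ((g : Matrix (Fin m) (Fin m) k)).map f = 1 := by
        rw [← Matrix.map_mul]
        norm_cast
        rw [inv_mul_cancel g]
        exact Matrix.map_one f f.map_zero f.map_one
      calc P.rep = (1 : Matrix (Fin m) (Fin m) (AlgebraicClosure k)).mulVec P.rep := by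
            rw [Matrix.one_mulVec]
        _ = _ := by rw [← hBA, ← Matrix.mulVec_mulVec, h, Matrix.mulVec_zero])

/-- The orbit of a projective point `P` under the cyclic group generated by
the projective automorphism induced by `g ∈ GL_m(𝔽_q)`. -/
noncomputable def projOrbit (k : Type*) [Field k] [Fintype k] (m : ℕ)
    (g : Matrix.GeneralLinearGroup (Fin m) k)
    (P : Projectivization (AlgebraicClosure k) (Fin m → AlgebraicClosure k)) :
    Set (Projectivization (AlgebraicClosure k) (Fin m → AlgebraicClosure k)) :=
  {Q | ∃ i : ℤ, Q = projGamma k m (g ^ i) P}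

/-!
Write `P = [v]` and let `D` be the period of `P` under `γ`, i.e. the least `D ≥ 1` with
`γ^D v = c v` for some `c`; the orbit of `P` has `D` points. If `γ^e` is scalar on an invariant
subspace containing `v`, then `γ^e` fixes `P`, so `D ∣ e`. Consequently the eigenspace
`U = ker (γ^D - c)` has exponent `D`, and it is proper: an invariant `Z ⊋ U` has exponent a
multiple of `D`, and exponent exactly `D` would put `Z` inside `U`. On the other side, properness
of `V` forces `V` to be the full eigenspace of `γ^(exp V)`, which contains `U` since `D ∣ exp V`.
Minimality of `P` then gives `U = V`, so `D = exp V`.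
-/

open Module.End

lemma Module.End.eigenspace_le_eigenspace_pow {R M : Type*} [CommRing R] [AddCommGroup M]
    [Module R M] (f : Module.End R M) (μ : R) (n : ℕ) :
    f.eigenspace μ ≤ (f ^ n).eigenspace (μ ^ n) := by
  intro x hx
  rw [mem_eigenspace_iff] at hx ⊢
  induction n with
  | zero => simp
  | succ n ih => rw [pow_succ, Module.End.mul_apply, hx, map_smul, ih, smul_smul, ← pow_succ']

lemma Module.End.map_eigenspace_of_commute {R M : Type*} [CommRing R] [AddCommGroup M]
    [Module R M] {f : Module.End R M} (u : (Module.End R M)ˣ) (h : Commute f u) (μ : R) :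
    (f.eigenspace μ).map (u : Module.End R M) = f.eigenspace μ :=
  le_antisymm (Submodule.map_le_iff_le_comap.mpr (mapsTo_genEigenspace_of_comm h μ 1))
    fun x hx => ⟨(↑u⁻¹ : Module.End R M) x, mapsTo_genEigenspace_of_comm h.units_inv_right μ 1 hx,
      by rw [← Module.End.mul_apply, Units.mul_inv, Module.End.one_apply]⟩

lemma Module.End.eq_of_mem_eigenspace {K M : Type*} [Field K] [AddCommGroup M] [Module K M]
    {f : Module.End K M} {a b : K} {v : M} (hv : v ≠ 0) (ha : v ∈ f.eigenspace a)
    (hb : v ∈ f.eigenspace b) : a = b :=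
  smul_left_injective K hv ((mem_eigenspace_iff.mp ha).symm.trans (mem_eigenspace_iff.mp hb))

lemma Projectivization.pow_smul_eq_self_iff {K M : Type*} [Field K] [AddCommGroup M] [Module K M]
    (u : LinearMap.GeneralLinearGroup K M) (e : ℕ) (P : Projectivization K M) :
    u ^ e • P = P ↔ ∃ c : K, ((u : Module.End K M) ^ e) P.rep = c • P.rep := by
  conv_lhs => rw [← P.mk_rep]
  rw [smul_mk, mk_eq_mk_iff']
  exact exists_congr fun _ => eq_comm

lemma MulAction.ncard_orbit_zpowers {G α : Type*} [Group G] [MulAction G α] (g : G) (a : α) :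
    (orbit (Subgroup.zpowers g) a).ncard = period g a := by
  rw [← Nat.card_coe_set_eq, Nat.card_congr (orbitZPowersEquiv g a), Nat.card_zmod]
  rfl

/-- `matEnd` as a group homomorphism, so that `projGamma` becomes Mathlib's action of
`GL` on projective space. -/
noncomputable def baseChangeGL (k : Type*) [Field k] (m : ℕ) :
    Matrix.GeneralLinearGroup (Fin m) k →*
      LinearMap.GeneralLinearGroup (AlgebraicClosure k) (Fin m → AlgebraicClosure k) :=
  Units.map (Matrix.toLinAlgEquiv'.toRingEquiv.toMonoidHom.comp
    (algebraMap k (AlgebraicClosure k)).mapMatrix.toMonoidHom)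

section

variable {k : Type*} [Field k] [Fintype k] {m : ℕ} (γ : Matrix.GeneralLinearGroup (Fin m) k)

local notation "K" => AlgebraicClosure k

open MulAction

lemma coe_baseChangeGL : (baseChangeGL k m γ : Module.End K (Fin m → K)) = matEnd k m γ := rfl

lemma projGamma_eq_smul (P : Projectivization K (Fin m → K)) :
    projGamma k m γ P = baseChangeGL k m γ • P := by
  conv_rhs => rw [← P.mk_rep]
  rfl

lemma projOrbit_eq_orbit (P : Projectivization K (Fin m → K)) :
    projOrbit k m γ P = orbit (Subgroup.zpowers (baseChangeGL k m γ)) P := by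
  ext Q
  simp only [projOrbit, Set.mem_ofPred_eq, projGamma_eq_smul, map_zpow, mem_orbit_iff,
    Subgroup.exists_zpowers, eq_comm]
  rfl

lemma isInvt_eigenspace_pow (e : ℕ) (c : K) :
    IsInvt k m γ ((matEnd k m γ ^ e).eigenspace c) :=
  map_eigenspace_of_commute (baseChangeGL k m γ) ((Commute.refl _).pow_left e) c

lemma expV_spec (W : Submodule K (Fin m → K)) :
    1 ≤ expV k m γ W ∧ ∃ c : K, W ≤ (matEnd k m γ ^ expV k m γ W).eigenspace c := by
  have hne : {e : ℕ | 1 ≤ e ∧ ∃ c : K, ∀ v ∈ W, (matEnd k m γ ^ e) v = c • v}.Nonempty := by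
    refine ⟨orderOf γ, orderOf_pos γ, 1, fun v _ => ?_⟩
    rw [← coe_baseChangeGL, ← Units.val_pow_eq_pow_val, ← map_pow, pow_orderOf_eq_one, map_one,
      Units.val_one, Module.End.one_apply, one_smul]
  obtain ⟨he, c, hc⟩ := Nat.sInf_mem hne
  exact ⟨he, c, fun v hv => mem_eigenspace_iff.mpr (hc v hv)⟩

lemma expV_le {W : Submodule K (Fin m → K)} {e : ℕ} {c : K} (he : 1 ≤ e)
    (hW : W ≤ (matEnd k m γ ^ e).eigenspace c) : expV k m γ W ≤ e :=
  Nat.sInf_le ⟨he, c, fun _ hw => mem_eigenspace_iff.mp (hW hw)⟩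

lemma period_baseChangeGL_pos (P : Projectivization K (Fin m → K)) :
    0 < period (baseChangeGL k m γ) P :=
  period_pos_of_orderOf_pos
    (Nat.pos_of_dvd_of_pos (orderOf_map_dvd _ γ) (orderOf_pos γ)) P

lemma exists_rep_mem_eigenspace_pow_period (P : Projectivization K (Fin m → K)) :
    ∃ c : K, P.rep ∈ (matEnd k m γ ^ period (baseChangeGL k m γ) P).eigenspace c :=
  ((Projectivization.pow_smul_eq_self_iff _ _ P).mp (pow_period_smul _ P)).imp
    fun _ => mem_eigenspace_iff.mpr

variable {γ}

lemma period_dvd_expV {W : Submodule K (Fin m → K)} {P : Projectivization K (Fin m → K)}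
    (hP : P.rep ∈ W) : period (baseChangeGL k m γ) P ∣ expV k m γ W := by
  obtain ⟨-, c, hc⟩ := expV_spec γ W
  rw [← pow_smul_eq_iff_period_dvd, Projectivization.pow_smul_eq_self_iff]
  exact ⟨c, mem_eigenspace_iff.mp (hc hP)⟩

lemma expV_eigenspace_pow_period {P : Projectivization K (Fin m → K)} {c : K}
    (hc : P.rep ∈ (matEnd k m γ ^ period (baseChangeGL k m γ) P).eigenspace c) :
    expV k m γ ((matEnd k m γ ^ period (baseChangeGL k m γ) P).eigenspace c) =
      period (baseChangeGL k m γ) P :=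
  le_antisymm (expV_le γ (period_baseChangeGL_pos γ P) le_rfl)
    (Nat.le_of_dvd (expV_spec γ _).1 (period_dvd_expV hc))

lemma isProper_eigenspace_pow_period {P : Projectivization K (Fin m → K)} {c : K}
    (hc : P.rep ∈ (matEnd k m γ ^ period (baseChangeGL k m γ) P).eigenspace c) :
    IsProper k m γ ((matEnd k m γ ^ period (baseChangeGL k m γ) P).eigenspace c) := by
  refine ⟨(Submodule.ne_bot_iff _).mpr ⟨_, hc, P.rep_nonzero⟩, isInvt_eigenspace_pow γ _ c,
    fun Z _ _ hUZ => ?_⟩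
  have hPZ := hUZ.le hc
  rw [expV_eigenspace_pow_period hc]
  refine (Nat.le_of_dvd (expV_spec γ Z).1 (period_dvd_expV hPZ)).lt_of_ne fun hD => hUZ.not_ge ?_
  obtain ⟨-, cZ, hZ⟩ := expV_spec γ Z
  rw [← hD] at hZ
  rwa [eq_of_mem_eigenspace P.rep_nonzero (hZ hPZ) hc] at hZ

lemma eq_eigenspace_of_isProper {V : Submodule K (Fin m → K)} (hV : IsProper k m γ V) {c : K}
    (hc : V ≤ (matEnd k m γ ^ expV k m γ V).eigenspace c) :
    V = (matEnd k m γ ^ expV k m γ V).eigenspace c :=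
  hc.eq_of_not_lt fun hlt =>
    (hV.2.2 _ (ne_bot_of_le_ne_bot hV.1 hc) (isInvt_eigenspace_pow γ _ c) hlt).not_ge
      (expV_le γ (expV_spec γ V).1 le_rfl)

theorem period_eq_expV {V : Submodule K (Fin m → K)} (hV : IsProper k m γ V)
    {P : Projectivization K (Fin m → K)} (hPV : P.rep ∈ V)
    (hPmin : ∀ W, IsProper k m γ W → W < V → P.rep ∉ W) :
    period (baseChangeGL k m γ) P = expV k m γ V := by
  obtain ⟨c, hc⟩ := exists_rep_mem_eigenspace_pow_period γ P
  obtain ⟨s, hs⟩ := period_dvd_expV hPV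
  obtain ⟨-, cV, hcV⟩ := expV_spec γ V
  have hPs := eigenspace_le_eigenspace_pow _ _ s hc
  rw [← pow_mul, ← hs] at hPs
  have hUV : (matEnd k m γ ^ period (baseChangeGL k m γ) P).eigenspace c ≤ V := by
    rw [eq_eigenspace_of_isProper hV hcV, eq_of_mem_eigenspace P.rep_nonzero (hcV hPV) hPs, hs,
      pow_mul]
    exact eigenspace_le_eigenspace_pow _ c s
  rw [← hUV.eq_of_not_lt fun hlt => hPmin _ (isProper_eigenspace_pow_period hc) hlt hc,
    expV_eigenspace_pow_period hc]

end

/-- Let `V` be a proper `γ`-invariant subspace of `k̄^{N+1}` and let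
`P ∈ ℙ(V)` be a point lying in no `ℙ(W)` for a proper `γ`-invariant
subspace `W` strictly contained in `V`.  Then the orbit of `P` under the
cyclic group generated by the projective automorphism induced by `γ` has
exactly `exp V` elements. -/
theorem stmt16 (k : Type*) [Field k] [Fintype k] (N : ℕ)
    (γ : Matrix.GeneralLinearGroup (Fin (N + 1)) k)
    (V : Submodule (AlgebraicClosure k) (Fin (N + 1) → AlgebraicClosure k))
    (hV : IsProper k (N + 1) γ V)
    (P : Projectivization (AlgebraicClosure k) (Fin (N + 1) → AlgebraicClosure k))
    (hPV : P.rep ∈ V)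
    (hPmin : ∀ W : Submodule (AlgebraicClosure k) (Fin (N + 1) → AlgebraicClosure k),
      IsProper k (N + 1) γ W → W < V → P.rep ∉ W) :
    (projOrbit k (N + 1) γ P).ncard = expV k (N + 1) γ V := by
  rw [projOrbit_eq_orbit, MulAction.ncard_orbit_zpowers]
  exact period_eq_expV hV hPV hPmin
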